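/- Let A ∈ ℝ^{n×n} be Hurwitz and B ∈ ℝ^{n×1}. Then for every orthonormal basis C₁, …, C_n of ℝ^n, the minimum ISS-gain of ẋ = Ax + Bu satisfies γ ≤ √( Σ_{i=1}^n ( ∫₀^{+∞} |C_iᵀ e^{As} B| ds )² ); consequently γ ≤ inf over all orthonormal bases C₁,…,C_n of ℝ^n of √( Σ_{i=1}^n ( ∫₀^{+∞} |C_iᵀ e^{As} B| ds )² ). -/

import Mathlib

open Filter MeasureTheory NormedSpace

noncomputable section

/-- Euclidean norm of a vector in `ℝ^k`. -/
def eNorm {k : ℕ} (v : Fin k → ℝ) : ℝ := Real.sqrt (∑ i, v i ^ 2)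

/-- Matrix norm induced by the Euclidean norms. -/
def matNorm {k l : ℕ} (M : Matrix (Fin k) (Fin l) ℝ) : ℝ :=
  sSup {r | ∃ x : Fin l → ℝ, eNorm x = 1 ∧ r = eNorm (M.mulVec x)}

/-- `A` is Hurwitz: every (complex) eigenvalue of `A` has negative real part. -/
def Hurwitz {n : ℕ} (A : Matrix (Fin n) (Fin n) ℝ) : Prop :=
  ∀ μ ∈ spectrum ℂ (A.map (Complex.ofReal)), μ.re < 0

/-- The matrix exponential `e^{tA}`. -/
def mexp {n : ℕ} (A : Matrix (Fin n) (Fin n) ℝ) (t : ℝ) : Matrix (Fin n) (Fin n) ℝ :=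
  exp (t • A)

/-!
For Hurwitz `A` every eigenvalue `μ` of `e^A` is `e^λ` for an eigenvalue `λ` of `A`, so
`|μ| = e^{Re λ} < 1`; by Gelfand's formula some power `e^{kA}` has norm `< 1`, which makes
`‖e^{sA}‖` decay exponentially and every `s ↦ |w ⬝ e^{sA} B|` integrable on `(0, ∞)`.
For an input with `|u| ≤ 1`, the `i`-th coordinate of `x(t)` in the basis `Cᵢ` is bounded by
`∫₀^∞ |Cᵢᵀ e^{As} B| ds`, and `|x(t)|² = Σᵢ (Cᵢᵀ x(t))²` because the basis is orthonormal.
-/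

open Set
open scoped Matrix

theorem exists_norm_pow_lt_one_of_spectrum_norm_lt_one {𝔸 : Type*} [NormedRing 𝔸]
    [NormedAlgebra ℂ 𝔸] [CompleteSpace 𝔸] (a : 𝔸) (h : ∀ z ∈ spectrum ℂ a, ‖z‖ < 1) :
    ∃ k : ℕ, 0 < k ∧ ‖a ^ k‖ < 1 := by
  rcases subsingleton_or_nontrivial 𝔸 with _ | _
  · exact ⟨1, one_pos, by simp [Subsingleton.elim (a ^ 1) 0]⟩
  have hρ : spectralRadius ℂ a < 1 := by
    exact_mod_cast spectrum.spectralRadius_lt_of_forall_lt a (r := 1)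
      fun z hz => by exact_mod_cast h z hz
  obtain ⟨k, hk, hk0⟩ :=
    (((spectrum.pow_nnnorm_pow_one_div_tendsto_nhds_spectralRadius a).eventually_lt_const hρ).and
      (eventually_gt_atTop 0)).exists
  refine ⟨k, hk0, ?_⟩
  by_contra! hge
  refine hk.not_ge (ENNReal.one_le_rpow ?_ (by positivity))
  exact_mod_cast hge

theorem pow_floor_div_le_exp {θ : ℝ} (hθ0 : 0 < θ) (hθ1 : θ ≤ 1) (T s : ℝ) :
    θ ^ ⌊s / T⌋₊ ≤ θ⁻¹ * Real.exp (Real.log θ / T * s) := by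
  have hfloor : s / T - 1 ≤ ⌊s / T⌋₊ := (Nat.sub_one_lt_floor _).le
  calc θ ^ ⌊s / T⌋₊ = Real.exp (⌊s / T⌋₊ * Real.log θ) := by
        rw [← Real.rpow_natCast, Real.rpow_def_of_pos hθ0, mul_comm]
    _ ≤ Real.exp ((s / T - 1) * Real.log θ) :=
        Real.exp_le_exp.mpr (mul_le_mul_of_nonpos_right hfloor (Real.log_nonpos hθ0.le hθ1))
    _ = θ⁻¹ * Real.exp (Real.log θ / T * s) := by
        rw [← Real.exp_log (inv_pos.mpr hθ0), Real.log_inv, ← Real.exp_add]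
        ring_nf

section ExpDecay

variable {𝔸 : Type*} [NormedRing 𝔸] [NormedAlgebra ℝ 𝔸] [NormedAlgebra ℚ 𝔸] [CompleteSpace 𝔸]

theorem norm_exp_add_mul_smul_le (a : 𝔸) (r T : ℝ) (m : ℕ) :
    ‖exp ((r + m * T) • a)‖ ≤ ‖exp (r • a)‖ * ‖exp (T • a)‖ ^ m := by
  induction m with
  | zero => simp
  | succ m ih =>
    have hsplit : exp ((r + (m + 1 : ℕ) * T) • a) = exp ((r + m * T) • a) * exp (T • a) := by
      rw [← exp_add_of_commute ((Commute.refl a).smul_left _ |>.smul_right _), ← add_smul]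
      push_cast
      ring_nf
    rw [hsplit, pow_succ, ← mul_assoc]
    exact (norm_mul_le _ _).trans (by gcongr)

theorem integrableOn_exp_smul_Ioi (a : 𝔸) {T : ℝ} (hT : 0 < T) (h : ‖exp (T • a)‖ < 1) :
    IntegrableOn (fun s : ℝ => exp (s • a)) (Ioi 0) := by
  have hcont : Continuous fun s : ℝ => exp (s • a) :=
    exp_continuous.comp (continuous_id.smul continuous_const)
  obtain ⟨M, hM⟩ := isCompact_Icc.exists_bound_of_continuousOn (hcont.continuousOn (s := Icc 0 T))
  have hM0 : 0 ≤ M := (norm_nonneg _).trans (hM 0 ⟨le_rfl, hT.le⟩)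
  -- `‖exp (T • a)‖` may vanish; `θ` keeps a finite logarithm.
  set θ := max ‖exp (T • a)‖ 2⁻¹
  have hθ0 : 0 < θ := lt_max_of_lt_right (by norm_num)
  have hθ1 : θ < 1 := max_lt h (by norm_num)
  have hε : 0 < -Real.log θ / T := div_pos (neg_pos.mpr (Real.log_neg hθ0 hθ1)) hT
  refine Integrable.mono' ((exp_neg_integrableOn_Ioi 0 hε).const_mul (M * θ⁻¹))
    hcont.aestronglyMeasurable ?_
  filter_upwards [ae_restrict_mem measurableSet_Ioi] with s hs
  set m := ⌊s / T⌋₊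
  have hr : s - m * T ∈ Icc 0 T := by
    have h1 := Nat.floor_le (div_nonneg (le_of_lt hs) hT.le)
    have h2 := Nat.lt_floor_add_one (s / T)
    rw [le_div_iff₀ hT] at h1
    rw [div_lt_iff₀ hT] at h2
    constructor <;> nlinarith
  calc ‖exp (s • a)‖ = ‖exp ((s - m * T + m * T) • a)‖ := by rw [sub_add_cancel]
    _ ≤ M * θ ^ m := (norm_exp_add_mul_smul_le a _ T m).trans
        (by gcongr; exacts [hM _ hr, le_max_left _ _])
    _ ≤ M * (θ⁻¹ * Real.exp (Real.log θ / T * s)) := by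
        gcongr
        exact pow_floor_div_le_exp hθ0 hθ1.le T s
    _ = M * θ⁻¹ * Real.exp (-(-Real.log θ / T) * s) := by ring_nf

end ExpDecay

namespace Matrix

section Aeval

open Polynomial

variable {m R : Type*} [Fintype m] [DecidableEq m] [CommRing R]

theorem pow_mulVec_of_mulVec_eq_smul {A : Matrix m m R} {v : m → R} {μ : R}
    (h : A *ᵥ v = μ • v) (k : ℕ) : A ^ k *ᵥ v = μ ^ k • v := by
  induction k with
  | zero => simp
  | succ k ih => rw [pow_succ', ← mulVec_mulVec, ih, mulVec_smul, h, smul_smul, pow_succ]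

theorem aeval_mulVec_of_mulVec_eq_smul {A : Matrix m m R} {v : m → R} {μ : R}
    (h : A *ᵥ v = μ • v) (p : R[X]) : aeval A p *ᵥ v = p.eval μ • v := by
  induction p using Polynomial.induction_on' with
  | add p q hp hq => simp only [map_add, add_mulVec, hp, hq, eval_add, add_smul]
  | monomial k a =>
    rw [aeval_monomial, eval_monomial, Algebra.algebraMap_eq_smul_one, smul_mul_assoc, one_mul,
      smul_mulVec, pow_mulVec_of_mulVec_eq_smul h, smul_smul]

theorem exists_aeval_eq_exp {𝕂 : Type*} [RCLike 𝕂] (A : Matrix m m 𝕂) :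
    ∃ p : 𝕂[X], aeval A p = exp A := by
  have hclosed : IsClosed (Algebra.adjoin 𝕂 {A} : Set (Matrix m m 𝕂)) :=
    (Subalgebra.toSubmodule (Algebra.adjoin 𝕂 {A})).closed_of_finiteDimensional
  have := NormedSpace.exp_mem (R := 𝕂) hclosed (Algebra.self_mem_adjoin_singleton 𝕂 A)
  rwa [Algebra.adjoin_singleton_eq_range_aeval] at this

end Aeval

variable {m : Type*} [Fintype m] [DecidableEq m]

attribute [local instance] Matrix.linftyOpNormedRing Matrix.linftyOpNormedAlgebra

theorem exp_mulVec_of_mulVec_eq_smul {𝕂 : Type*} [RCLike 𝕂] {A : Matrix m m 𝕂} {v : m → 𝕂}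
    {μ : 𝕂} (h : A *ᵥ v = μ • v) : exp A *ᵥ v = exp μ • v := by
  let evalAt : Matrix m m 𝕂 →+ (m → 𝕂) := AddMonoidHom.mk' (· *ᵥ v) fun M N => add_mulVec M N v
  have hA := (exp_series_hasSum_exp' (𝕂 := 𝕂) A).map evalAt
    (continuous_id.matrix_mulVec continuous_const)
  refine hA.unique ?_
  convert (exp_series_hasSum_exp' (𝕂 := 𝕂) μ).smul_const v using 1
  ext k : 1
  simp [evalAt, smul_mulVec, pow_mulVec_of_mulVec_eq_smul h, smul_smul]

/-- `exp A = p(A)` for a polynomial `p`, the subalgebra generated by `A` being closed; hence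
`σ(exp A) = p(σ(A))` by spectral mapping, and `p` agrees with `exp` on eigenvalues. -/
theorem spectrum_exp_subset (A : Matrix m m ℂ) : spectrum ℂ (exp A) ⊆ exp '' spectrum ℂ A := by
  rcases subsingleton_or_nontrivial (Matrix m m ℂ) with _ | _
  · simp [spectrum.of_subsingleton]
  obtain ⟨p, hp⟩ := A.exists_aeval_eq_exp
  rw [← hp, spectrum.map_polynomial_aeval]
  rintro _ ⟨μ, hμ, rfl⟩
  obtain ⟨v, hv, hv0⟩ := (Module.End.hasEigenvalue_iff_mem_spectrum.mpr
    ((spectrum_toLin' A).symm ▸ hμ)).exists_hasEigenvector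
  have hAv : A *ᵥ v = μ • v := by rwa [Module.End.mem_eigenspace_iff, toLin'_apply] at hv
  refine ⟨μ, hμ, smul_left_injective ℂ hv0 ?_⟩
  show exp μ • v = p.eval μ • v
  rw [← exp_mulVec_of_mulVec_eq_smul hAv, ← aeval_mulVec_of_mulVec_eq_smul hAv, hp]

theorem linfty_opNorm_map_ofReal (M : Matrix m m ℝ) : ‖M.map Complex.ofReal‖ = ‖M‖ := by
  simp [linfty_opNorm_def]

theorem exp_map_ofReal (M : Matrix m m ℝ) :
    (exp M).map Complex.ofReal = exp (M.map Complex.ofReal) :=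
  map_exp Complex.ofRealHom.mapMatrix
    (show Continuous fun M : Matrix m m ℝ => M.map Complex.ofReal from
      continuous_id.matrix_map Complex.continuous_ofReal) M

theorem abs_dotProduct_mulVec_le (w B : m → ℝ) (M : Matrix m m ℝ) :
    |w ⬝ᵥ (M *ᵥ B)| ≤ (∑ i, |w i|) * (‖M‖ * ‖B‖) := by
  calc |w ⬝ᵥ (M *ᵥ B)| ≤ ∑ i, |w i| * |(M *ᵥ B) i| := by
        simpa only [dotProduct, abs_mul] using
          Finset.abs_sum_le_sum_abs (fun i => w i * (M *ᵥ B) i) Finset.univ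
    _ ≤ ∑ i, |w i| * (‖M‖ * ‖B‖) := by
        refine Finset.sum_le_sum fun i _ => mul_le_mul_of_nonneg_left ?_ (abs_nonneg _)
        exact (norm_le_pi_norm (M *ᵥ B) i).trans (linfty_opNorm_mulVec M B)
    _ = _ := (Finset.sum_mul ..).symm

theorem sum_sq_dotProduct_of_orthonormal {R : Type*} [CommRing R] {C : m → m → R}
    (hC : ∀ i j, C i ⬝ᵥ C j = if i = j then 1 else 0) (v : m → R) :
    ∑ i, (C i ⬝ᵥ v) ^ 2 = ∑ j, v j ^ 2 := by
  set M : Matrix m m R := Matrix.of C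
  have hMMt : M * Mᵀ = 1 := by
    ext i j
    simpa [M, mul_apply, one_apply, dotProduct] using hC i j
  calc ∑ i, (C i ⬝ᵥ v) ^ 2 = (M *ᵥ v) ⬝ᵥ (M *ᵥ v) := by simp [sq, dotProduct, mulVec, M]
    _ = v ⬝ᵥ ((Mᵀ * M) *ᵥ v) := by rw [← mulVec_mulVec, dotProduct_mulVec v, vecMul_transpose]
    _ = ∑ j, v j ^ 2 := by simp [mul_eq_one_comm.mp hMMt, dotProduct, sq]

end Matrix

section Hurwitz

variable {n : ℕ} {A : Matrix (Fin n) (Fin n) ℝ}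

attribute [local instance] Matrix.linftyOpNormedRing Matrix.linftyOpNormedAlgebra

theorem continuous_mexp (A : Matrix (Fin n) (Fin n) ℝ) : Continuous (mexp A) :=
  exp_continuous.comp (continuous_id.smul continuous_const)

theorem Hurwitz.exists_norm_exp_lt_one (hA : Hurwitz A) : ∃ T : ℝ, 0 < T ∧ ‖exp (T • A)‖ < 1 := by
  have hspec : ∀ z ∈ spectrum ℂ (exp (A.map Complex.ofReal)), ‖z‖ < 1 := by
    intro z hz
    obtain ⟨μ, hμ, rfl⟩ := Matrix.spectrum_exp_subset _ hz
    rw [← Complex.exp_eq_exp_ℂ, Complex.norm_exp, Real.exp_lt_one_iff]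
    exact hA μ hμ
  obtain ⟨k, hk, hlt⟩ := exists_norm_pow_lt_one_of_spectrum_norm_lt_one _ hspec
  refine ⟨k, Nat.cast_pos.mpr hk, ?_⟩
  have hmap : ((k : ℝ) • A).map Complex.ofReal = k • A.map Complex.ofReal := by
    ext i j
    simp
  rwa [← Matrix.linfty_opNorm_map_ofReal, Matrix.exp_map_ofReal, hmap, Matrix.exp_nsmul]

theorem Hurwitz.integrableOn_norm_mexp (hA : Hurwitz A) :
    IntegrableOn (fun s => ‖mexp A s‖) (Ioi 0) := by
  obtain ⟨T, hT, hlt⟩ := hA.exists_norm_exp_lt_one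
  exact (integrableOn_exp_smul_Ioi A hT hlt).norm

theorem Hurwitz.integrableOn_abs_dotProduct_mexp_mulVec (hA : Hurwitz A) (w B : Fin n → ℝ) :
    IntegrableOn (fun s => |w ⬝ᵥ (mexp A s *ᵥ B)|) (Ioi 0) := by
  refine Integrable.mono' (hA.integrableOn_norm_mexp.mul_const ‖B‖ |>.const_mul (∑ i, |w i|))
    ?_ (ae_of_all _ fun s => ?_)
  · exact (continuous_const.dotProduct ((continuous_mexp A).matrix_mulVec continuous_const)).abs
      |>.aestronglyMeasurable
  · rw [Real.norm_eq_abs, abs_abs]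
    exact Matrix.abs_dotProduct_mulVec_le w B (mexp A s)

end Hurwitz

theorem abs_dotProduct_intervalIntegral_smul_le {n : ℕ} {G : ℝ → Fin n → ℝ} (hG : Continuous G)
    {u : ℝ → ℝ} (hu : Measurable u) {t : ℝ} (ht : 0 ≤ t)
    (hub : ∀ᵐ s ∂(volume.restrict (Ioc 0 t)), |u s| ≤ 1) (w : Fin n → ℝ) :
    |w ⬝ᵥ ∫ s in (0 : ℝ)..t, u s • G s| ≤ ∫ s in (0 : ℝ)..t, |w ⬝ᵥ G s| := by
  let L : (Fin n → ℝ) →L[ℝ] ℝ := LinearMap.toContinuousLinearMap (dotProductBilin ℝ ℝ w)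
  have hu_int : IntervalIntegrable u volume 0 t := by
    rw [intervalIntegrable_iff_integrableOn_Ioc_of_le ht]
    exact Measure.integrableOn_of_bounded measure_Ioc_lt_top.ne hu.aestronglyMeasurable hub
  have hcomm : w ⬝ᵥ ∫ s in (0 : ℝ)..t, u s • G s = ∫ s in (0 : ℝ)..t, u s * (w ⬝ᵥ G s) := by
    simpa [L] using (L.intervalIntegral_comp_comm (hu_int.smul_continuousOn hG.continuousOn)).symm
  rw [hcomm, ← Real.norm_eq_abs]
  refine intervalIntegral.norm_integral_le_of_norm_le ht ?_
    ((continuous_const.dotProduct hG).abs.intervalIntegrable 0 t)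
  filter_upwards [(ae_restrict_iff' measurableSet_Ioc).mp hub] with s hs hmem
  rw [norm_mul, Real.norm_eq_abs, Real.norm_eq_abs]
  exact mul_le_of_le_one_left (abs_nonneg _) (hs hmem)

theorem intervalIntegral_comp_sub_left_le_integral_Ioi {f : ℝ → ℝ} (hf : IntegrableOn f (Ioi 0))
    (hf0 : ∀ s, 0 ≤ f s) {t : ℝ} (ht : 0 ≤ t) :
    ∫ s in (0 : ℝ)..t, f (t - s) ≤ ∫ s in Ioi 0, f s := by
  rw [intervalIntegral.integral_comp_sub_left, sub_self, sub_zero,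
    intervalIntegral.integral_of_le ht]
  exact setIntegral_mono_set hf (ae_of_all _ fun s => hf0 s) Ioc_subset_Ioi_self.eventuallyLE

theorem Hurwitz.eNorm_intervalIntegral_le {n : ℕ} {A : Matrix (Fin n) (Fin n) ℝ} (hA : Hurwitz A)
    (B : Fin n → ℝ) {C : Fin n → Fin n → ℝ}
    (hC : ∀ i j, C i ⬝ᵥ C j = if i = j then (1 : ℝ) else 0) {t : ℝ} (ht : 0 ≤ t)
    {u : ℝ → ℝ} (hu : Measurable u) (hub : ∀ᵐ s ∂(volume.restrict (Ici 0)), |u s| ≤ 1) :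
    eNorm (∫ s in (0 : ℝ)..t, u s • mexp A (t - s) *ᵥ B) ≤
      √(∑ i, (∫ s in Ioi 0, |C i ⬝ᵥ (mexp A s *ᵥ B)|) ^ 2) := by
  have hG : Continuous fun s => mexp A (t - s) *ᵥ B :=
    ((continuous_mexp A).comp (continuous_const.sub continuous_id)).matrix_mulVec continuous_const
  have hub' : ∀ᵐ s ∂(volume.restrict (Ioc 0 t)), |u s| ≤ 1 :=
    ae_restrict_of_ae_restrict_of_subset (Ioc_subset_Ioi_self.trans Ioi_subset_Ici_self) hub
  rw [eNorm, ← Matrix.sum_sq_dotProduct_of_orthonormal hC]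
  refine Real.sqrt_le_sqrt (Finset.sum_le_sum fun i _ => ?_)
  rw [← sq_abs]
  refine pow_le_pow_left₀ (abs_nonneg _) ?_ 2
  exact (abs_dotProduct_intervalIntegral_smul_le hG hu ht hub' (C i)).trans
    (intervalIntegral_comp_sub_left_le_integral_Ioi
      (hA.integrableOn_abs_dotProduct_mexp_mulVec (C i) B) (fun _ => abs_nonneg _) ht)

/-- Section 5.4, formulas (5.21)–(5.23): for Hurwitz `A`, every orthonormal basis
`C₁, …, C_n` of `ℝⁿ` gives the upper bound
`γ ≤ √(Σᵢ (∫₀^∞ |Cᵢᵀ e^{As} B| ds)²)` for the minimum ISS-gain, and consequently `γ` is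
bounded by the infimum of this quantity over all orthonormal bases. -/
theorem statement_18 {n : ℕ}
    (A : Matrix (Fin n) (Fin n) ℝ) (B : Fin n → ℝ) (hA : Hurwitz A)
    (x : (ℝ → ℝ) → ℝ → Fin n → ℝ)
    (hx : x = fun u t => ∫ s in (0 : ℝ)..t, u s • (mexp A (t - s)).mulVec B)
    (γ : ℝ)
    (hγ : γ = sSup {r | ∃ t ≥ (0 : ℝ), ∃ u : ℝ → ℝ, Measurable u ∧
      (∀ᵐ s ∂(volume.restrict (Set.Ici (0 : ℝ))), |u s| ≤ 1) ∧ r = eNorm (x u t)})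
    (C : Fin n → Fin n → ℝ)
    (hC : ∀ i j, dotProduct (C i) (C j) = if i = j then (1 : ℝ) else 0) :
    γ ≤ Real.sqrt (∑ i,
      (∫ s in Set.Ioi (0 : ℝ), |dotProduct (C i) ((mexp A s).mulVec B)|) ^ 2) ∧
    γ ≤ sInf {r | ∃ C' : Fin n → Fin n → ℝ,
      (∀ i j, dotProduct (C' i) (C' j) = if i = j then (1 : ℝ) else 0) ∧
      r = Real.sqrt (∑ i,
        (∫ s in Set.Ioi (0 : ℝ), |dotProduct (C' i) ((mexp A s).mulVec B)|) ^ 2)} := by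
  have hbound : ∀ C' : Fin n → Fin n → ℝ, (∀ i j, C' i ⬝ᵥ C' j = if i = j then (1 : ℝ) else 0) →
      γ ≤ √(∑ i, (∫ s in Ioi 0, |C' i ⬝ᵥ (mexp A s *ᵥ B)|) ^ 2) := by
    intro C' hC'
    rw [hγ]
    refine Real.sSup_le ?_ (Real.sqrt_nonneg _)
    rintro r ⟨t, ht, u, hu, hub, rfl⟩
    rw [hx]
    exact hA.eNorm_intervalIntegral_le B hC' ht hu hub
  exact ⟨hbound C hC, le_csInf ⟨_, C, hC, rfl⟩ fun r ⟨C', hC', hr⟩ => hr ▸ hbound C' hC'⟩
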